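/- arXiv:2209.08186 — 2 statements merged into one kernel-verified Lean document; each statement's English description precedes it below -/
import Mathlib

section
/- Let d ≥ 2 be an integer, let s be a positive integer, let n ∈ ℕ and let 0 ≤ m ≤ n. Set h(t) = J_{n−m}^{(2m+d−2, −s)}(1−2t) · t^m. Then the identity t²(1−t) h″(t) + t(d−1−(d−s)t) h′(t) − m(m+d−2) h(t) = −n(n+d−s−1) · t · h(t) holds for all real t if and only if m ≤ n−s or m = n. (Equivalently, the Sobolev orthogonal polynomials S_{m,Y}^{n,(−1,−s)}(x,t) = J_{n−m}^{(2m+d−2,−s)}(1−2t) Y(x), Y a solid harmonic of degree m, are eigenfunctions of the operator D_{−s} with eigenvalue −n(n+d−s−1) exactly when m ≤ n−s or m = n.) -/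
/-!
Put `h = G(t) tᵐ`. The one-variable eigen-equation for `h` is `tᵐ⁺¹` times the hypergeometric
equation `t(1-t)G'' + (A - Bt)G' + cG = 0`, where `A = 2m+d-1`, `B = 2m+d-s`, `k = n-m`,
`c = k(k+2m+d-s-1)` and `G(t) = J_k^{(2m+d-2,-s)}(1-2t)`. Differentiating a hypergeometric
equation gives another one, with `A, B` raised by `1, 2`.

If `k ≥ s`, `G⁽ˢ⁾` is a multiple of the Jacobi polynomial `P̂_{k-s}^{(2m+d-2+s,0)}(1-2t)`, which
solves the `s`-times differentiated equation; as `G, …, G⁽ˢ⁻¹⁾` vanish at `t = 1` and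
`A - B = s-1`, the left-hand side of the equation has vanishing `s`-th derivative and vanishing
lower derivatives at `1`, hence is zero. If `k = 0`, `G` is constant and `c = 0`. If `0 < k < s`,
`G` is a multiple of `(1-t)ᵏ`, and the `(k-1)`-st derivative of the left-hand side at `t = 1` is
a nonzero multiple of `s - k`.
-/

open MeasureTheory Finset

noncomputable section

/-- Pochhammer symbol `(x)_k`. -/
def poch (x : ℝ) (k : ℕ) : ℝ := (ascPochhammer ℝ k).eval x

/-- Jacobi polynomial `P_n^{(a,b)}` for real parameters. -/
def jacobiP (a b : ℝ) (n : ℕ) (t : ℝ) : ℝ :=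
  (poch (a + 1) n / (n.factorial : ℝ)) *
    ∑ k ∈ Finset.range (n + 1),
      poch (-(n : ℝ)) k * poch ((n : ℝ) + a + b + 1) k /
        ((k.factorial : ℝ) * poch (a + 1) k) * ((1 - t) / 2) ^ k

/-- Normalizing constant `A_n^{(a,b)}`. -/
def jacobiA (a b : ℝ) (n : ℕ) : ℝ := 2 ^ n / poch ((n : ℝ) + a + b + 1) n

/-- Normalized Jacobi polynomial `P̂_n^{(a,b)}`. -/
def jacobiPhat (a b : ℝ) (n : ℕ) (t : ℝ) : ℝ := jacobiA a b n * jacobiP a b n t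

/-- The polynomials `J_n^{(a-s,b-s)}` (defined from the parameters `a, b > -1`). -/
def jacobiJ (a b : ℝ) (s n : ℕ) (t : ℝ) : ℝ :=
  if n < s then (1 + t) ^ n / (n.factorial : ℝ)
  else ∫ u in (-1 : ℝ)..t, (t - u) ^ (s - 1) / ((s - 1).factorial : ℝ) * jacobiPhat a b (n - s) u

/-- The polynomials `J_n^{(a,-s)}`, built from `P̂^{(a+s,0)}`. -/
def jacobiJneg (a : ℝ) (s n : ℕ) (t : ℝ) : ℝ := jacobiJ (a + s) 0 s n t

open Polynomial

namespace Polynomial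

section CommRing

variable {R : Type*} [CommRing R]

def hypergeomOp (A B c : R) (p : R[X]) : R[X] :=
  X * (1 - X) * derivative (derivative p) + (C A - C B * X) * derivative p + C c * p

section hypergeomOp

variable (A B c : R) (p : R[X])

lemma derivative_hypergeomOp :
    derivative (hypergeomOp A B c p) = hypergeomOp (A + 1) (B + 2) (c - B) (derivative p) := by
  simp only [hypergeomOp, derivative_mul, derivative_one,
    derivative_X, derivative_C, map_add, map_sub, map_one, map_ofNat]
  ring

lemma iterate_derivative_hypergeomOp (j : ℕ) :
    derivative^[j] (hypergeomOp A B c p) =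
      hypergeomOp (A + j) (B + 2 * j) (c - j * B - j * (j - 1)) (derivative^[j] p) := by
  induction j generalizing A B c p with
  | zero => simp
  | succ j ih =>
    rw [Function.iterate_succ_apply, derivative_hypergeomOp, ih,
      ← Function.iterate_succ_apply derivative]
    congr 1 <;> push_cast <;> ring

lemma hypergeomOp_C_mul (a : R) : hypergeomOp A B c (C a * p) = C a * hypergeomOp A B c p := by
  simp only [hypergeomOp, derivative_C_mul]
  ring

lemma eval_one_hypergeomOp :
    eval 1 (hypergeomOp A B c p) = (A - B) * eval 1 (derivative p) + c * eval 1 p := by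
  simp only [hypergeomOp, eval_add, eval_mul, eval_sub, eval_one, eval_X, eval_C]
  ring

lemma coeff_X_mul_derivative (j : ℕ) : (X * derivative p).coeff j = j * p.coeff j := by
  cases j with
  | zero => simp
  | succ j => rw [coeff_X_mul, coeff_derivative]; push_cast; ring

lemma coeff_hypergeomOp (j : ℕ) :
    (hypergeomOp A B c p).coeff j =
      (j + 1) * (j + A) * p.coeff (j + 1) + (c - j * (j - 1) - B * j) * p.coeff j := by
  have hsplit : hypergeomOp A B c p = X * derivative (derivative p)
      - X * (X * derivative (derivative p)) + C A * derivative p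
      - C B * (X * derivative p) + C c * p := by
    rw [hypergeomOp]; ring
  rw [hsplit]
  simp only [coeff_add, coeff_sub, coeff_C_mul, coeff_X_mul_derivative, coeff_derivative]
  cases j with
  | zero => simp
  | succ j =>
    rw [coeff_X_mul, coeff_X_mul_derivative, coeff_derivative]
    push_cast; ring

lemma eval_one_iterate_derivative_hypergeomOp_X_sub_C_pow (j : ℕ) :
    eval 1 (derivative^[j] (hypergeomOp A B c ((X - C 1) ^ (j + 1)))) =
      (A - B - j) * (j + 1).factorial := by
  rw [iterate_derivative_hypergeomOp, eval_one_hypergeomOp,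
    ← Function.iterate_succ_apply' derivative,
    iterate_derivative_X_sub_pow_self, iterate_derivative_X_sub_pow, Nat.add_sub_cancel_left]
  simp only [Nat.succ_eq_add_one, eval_natCast, map_one, pow_one, nsmul_eq_mul, eval_mul, eval_sub,
    eval_X, eval_one, sub_self, mul_zero, add_zero]
  ring

end hypergeomOp

lemma iterate_derivative_comp_C_mul_X_add_C (p : R[X]) (a b : R) (j : ℕ) :
    derivative^[j] (p.comp (C a * X + C b)) =
      C (a ^ j) * (derivative^[j] p).comp (C a * X + C b) := by
  induction j generalizing p with
  | zero => simp
  | succ j ih =>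
    have hlin : derivative (C a * X + C b) = C a := by simp
    rw [Function.iterate_succ_apply, derivative_comp, hlin, iterate_derivative_C_mul, ih,
      Function.iterate_succ_apply, pow_succ, map_mul]
    ring

lemma eq_zero_of_iterate_derivative_eq_zero [IsAddTorsionFree R] {p : R[X]} {a : R} {s : ℕ}
    (hs : derivative^[s] p = 0) (ha : ∀ j < s, eval a (derivative^[j] p) = 0) : p = 0 := by
  induction s generalizing p with
  | zero => exact hs
  | succ s ih =>
    have hp' : derivative p = 0 :=
      ih hs fun j hj => by simpa only [← Function.iterate_succ_apply] using ha (j + 1) (by omega)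
    have h0 : eval a p = 0 := ha 0 s.succ_pos
    rw [eq_C_of_derivative_eq_zero hp', eval_C] at h0
    rw [eq_C_of_derivative_eq_zero hp', h0, map_zero]

lemma hypergeomOp_eq_zero_of_iterate_derivative [IsAddTorsionFree R] {A B c : R} {s : ℕ}
    {p : R[X]} (hAB : A - B = s - 1)
    (hs : hypergeomOp (A + s) (B + 2 * s) (c - s * B - s * (s - 1)) (derivative^[s] p) = 0)
    (h1 : ∀ j < s, eval 1 (derivative^[j] p) = 0) : hypergeomOp A B c p = 0 := by
  refine eq_zero_of_iterate_derivative_eq_zero (a := 1) (s := s) ?_ fun j hj => ?_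
  · rwa [iterate_derivative_hypergeomOp]
  · rw [iterate_derivative_hypergeomOp, eval_one_hypergeomOp,
      ← Function.iterate_succ_apply' derivative, h1 j hj, mul_zero, add_zero]
    rcases (Nat.succ_le_of_lt hj).lt_or_eq with hjs | rfl
    · rw [h1 _ hjs, mul_zero]
    · -- the boundary term that survives at `j = s - 1` has the factor `A - B - j = 0`
      push_cast at hAB
      rw [show A + j - (B + 2 * j) = 0 by linear_combination hAB, zero_mul]

lemma X_mul_derivative_X_pow (m : ℕ) : X * derivative (X ^ m) = (m : R[X]) * X ^ m := by
  cases m with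
  | zero => simp
  | succ m => rw [derivative_X_pow]; simp only [map_natCast]; push_cast; ring

lemma X_sq_mul_derivative_derivative_X_pow (m : ℕ) :
    X ^ 2 * derivative (derivative (X ^ m)) = (m : R[X]) * ((m : R[X]) - 1) * X ^ m := by
  rcases m with _ | _ | m
  · simp
  · simp
  · rw [derivative_X_pow, derivative_C_mul, derivative_X_pow]
    simp only [map_natCast]
    push_cast
    ring

lemma X_pow_mul_hypergeomOp (G : R[X]) (m : ℕ) (d e c : R) :
    X ^ 2 * (1 - X) * derivative (derivative (G * X ^ m))
        + X * (C (d - 1) - C e * X) * derivative (G * X ^ m)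
        - C (m * (m + d - 2)) * (G * X ^ m) - C c * X * (G * X ^ m) =
      X ^ (m + 1) * hypergeomOp (2 * m + d - 1) (2 * m + e) (-c - m * (m + e - 1)) G := by
  have h1 := X_mul_derivative_X_pow (R := R) m
  have h2 := X_sq_mul_derivative_derivative_X_pow (R := R) m
  simp only [derivative_mul, hypergeomOp, map_sub, map_add, map_mul, map_neg,
    map_natCast, map_ofNat, map_one] at h1 h2 ⊢
  linear_combination (1 - X) * G * h2
    + (2 * X * (1 - X) * derivative G + (C d - 1 - C e * X) * G) * h1

end CommRing

section Field

variable {K : Type*} [Field K] [CharZero K]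

lemma exists_derivative_eq (p : K[X]) : ∃ q : K[X], derivative q = p := by
  refine ⟨p.sum fun i a => C (a / (i + 1)) * X ^ (i + 1), ?_⟩
  rw [Polynomial.sum, map_sum]
  conv_rhs => rw [← p.sum_C_mul_X_pow_eq]
  refine Finset.sum_congr rfl fun i _ => ?_
  rw [derivative_C_mul_X_pow, Nat.add_sub_cancel]
  congr 2
  push_cast
  field_simp

lemma exists_iterate_derivative_eq (p : K[X]) (a : K) (s : ℕ) :
    ∃ q : K[X], derivative^[s] q = p ∧ ∀ j < s, eval a (derivative^[j] q) = 0 := by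
  induction s with
  | zero => exact ⟨p, rfl, fun j hj => absurd hj j.not_lt_zero⟩
  | succ s ih =>
    obtain ⟨q, hq, hqa⟩ := ih
    obtain ⟨r, hr⟩ := exists_derivative_eq q
    refine ⟨r - C (eval a r), ?_, fun j hj => ?_⟩
    · rw [Function.iterate_succ_apply, derivative_sub, derivative_C, sub_zero, hr, hq]
    · cases j with
      | zero => simp
      | succ j =>
        rw [Function.iterate_succ_apply, derivative_sub, derivative_C, sub_zero, hr]
        exact hqa j (by omega)

end Field

lemma contDiff_eval {𝕜 : Type*} [NontriviallyNormedField 𝕜] (p : 𝕜[X]) (n : WithTop ℕ∞) :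
    ContDiff 𝕜 n fun x => p.eval x := by
  simpa only [coe_aeval_eq_eval] using p.contDiff_aeval (𝕜 := 𝕜) n

lemma iteratedDeriv_eval {𝕜 : Type*} [NontriviallyNormedField 𝕜] (p : 𝕜[X]) (k : ℕ) :
    iteratedDeriv k (fun x => p.eval x) = fun x => (derivative^[k] p).eval x := by
  rw [iteratedDeriv_eq_iterate]
  induction k generalizing p with
  | zero => rfl
  | succ k ih =>
    rw [Function.iterate_succ_apply, Function.iterate_succ_apply, ← ih]
    congr 1
    ext x
    exact p.deriv

open Set in
lemma integral_pow_mul_iterate_derivative_eq_eval (p : ℝ[X]) (a x : ℝ) (s : ℕ)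
    (ha : ∀ j ≤ s, eval a (derivative^[j] p) = 0) :
    ∫ u in a..x, (x - u) ^ s / s.factorial * eval u (derivative^[s + 1] p) = eval x p := by
  rcases eq_or_ne a x with rfl | hax
  · simpa using (ha 0 s.zero_le).symm
  have hderiv : ∀ k, ∀ u ∈ uIcc a x,
      iteratedDerivWithin k (fun u => p.eval u) (uIcc a x) u = eval u (derivative^[k] p) :=
    fun k u hu => by
      rw [iteratedDerivWithin_eq_iteratedDeriv (uniqueDiffOn_uIcc hax)
        (p.contDiff_eval k).contDiffAt hu, iteratedDeriv_eval]
  have htaylor := taylor_integral_remainder (f := fun u => p.eval u) (x₀ := a) (x := x) (n := s)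
    (p.contDiff_eval _).contDiffOn
  have hpoly : taylorWithinEval (fun u => p.eval u) s (uIcc a x) a x = 0 := by
    rw [taylor_within_apply]
    refine Finset.sum_eq_zero fun j hj => ?_
    rw [hderiv j a left_mem_uIcc, ha j (Nat.lt_succ_iff.mp (Finset.mem_range.mp hj)), smul_zero]
  rw [hpoly, sub_zero] at htaylor
  rw [htaylor]
  refine intervalIntegral.integral_congr fun u hu => ?_
  simp only [smul_eq_mul, hderiv (s + 1) u hu]

end Polynomial

lemma eigen_equation_iff_hypergeomOp_eq_zero (G : ℝ[X]) (m : ℕ) (d e c : ℝ) :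
    (∀ t : ℝ, t ^ 2 * (1 - t) * deriv (deriv fun u => eval u G * u ^ m) t
        + t * (d - 1 - e * t) * deriv (fun u => eval u G * u ^ m) t
        - m * (m + d - 2) * (eval t G * t ^ m) = c * t * (eval t G * t ^ m)) ↔
      hypergeomOp (2 * m + d - 1) (2 * m + e) (-c - m * (m + e - 1)) G = 0 := by
  have hpoly : (fun u => eval u G * u ^ m) = fun u => eval u (G * X ^ m) := by simp
  have hderiv (p : ℝ[X]) : deriv (fun u => eval u p) = fun u => eval u (derivative p) :=
    funext fun _ => p.deriv
  rw [← mul_eq_zero_iff_left (pow_ne_zero (m + 1) (X_ne_zero (R := ℝ))),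
    ← X_pow_mul_hypergeomOp]
  simp only [hpoly, hderiv]
  constructor
  · intro h
    refine Polynomial.funext fun t => ?_
    simp only [eval_sub, eval_add, eval_mul, eval_pow, eval_X, eval_C, eval_one, eval_zero]
    linear_combination h t
  · intro h t
    have ht := congrArg (eval t) h
    simp only [eval_sub, eval_add, eval_mul, eval_pow, eval_X, eval_C, eval_one, eval_zero] at ht
    linear_combination ht

def jacobiCoeff (a b : ℝ) (n k : ℕ) : ℝ :=
  poch (-(n : ℝ)) k * poch ((n : ℝ) + a + b + 1) k / ((k.factorial : ℝ) * poch (a + 1) k)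

def jacobiHypergeom (a b : ℝ) (n : ℕ) : ℝ[X] :=
  ∑ k ∈ range (n + 1), C (jacobiCoeff a b n k) * X ^ k

lemma jacobiPhat_eq_eval (a b : ℝ) (n : ℕ) (t : ℝ) :
    jacobiPhat a b n t =
      jacobiA a b n * (poch (a + 1) n / n.factorial) *
        (jacobiHypergeom a b n).eval ((1 - t) / 2) := by
  simp only [jacobiPhat, jacobiP, jacobiHypergeom, jacobiCoeff, eval_finsetSum, eval_mul, eval_C,
    eval_pow, eval_X, mul_assoc]

lemma jacobiCoeff_eq_zero_of_lt {a b : ℝ} {n k : ℕ} (h : n < k) : jacobiCoeff a b n k = 0 := by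
  simp [jacobiCoeff, poch, ascPochhammer_eval_neg_coe_nat_of_lt h]

lemma jacobiCoeff_succ {a : ℝ} (ha : -1 < a) (b : ℝ) (n k : ℕ) :
    (k + 1) * (k + 1 + a) * jacobiCoeff a b n (k + 1) =
      (k - n) * (k + n + a + b + 1) * jacobiCoeff a b n k := by
  have hpos : 0 < poch (a + 1) k := ascPochhammer_pos k _ (by linarith)
  have hk : (0 : ℝ) < a + 1 + k := by have := k.cast_nonneg (α := ℝ); linarith
  simp only [jacobiCoeff, poch, ascPochhammer_succ_eval, Nat.factorial_succ] at hpos ⊢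
  push_cast
  field_simp
  ring

lemma coeff_jacobiHypergeom (a b : ℝ) (n j : ℕ) :
    (jacobiHypergeom a b n).coeff j = jacobiCoeff a b n j := by
  simp only [jacobiHypergeom, finsetSum_coeff, coeff_C_mul_X_pow, Finset.sum_ite_eq, mem_range]
  split_ifs with h
  · rfl
  · exact (jacobiCoeff_eq_zero_of_lt (by omega)).symm

lemma hypergeomOp_jacobiHypergeom {a : ℝ} (ha : -1 < a) (b : ℝ) (n : ℕ) :
    hypergeomOp (a + 1) (a + b + 2) (n * (n + a + b + 1)) (jacobiHypergeom a b n) = 0 := by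
  ext j
  rw [coeff_hypergeomOp, coeff_jacobiHypergeom, coeff_jacobiHypergeom, coeff_zero]
  linear_combination jacobiCoeff_succ ha b n j

lemma jacobiJ_eq_eval {a b : ℝ} {s n : ℕ} (hs : 1 ≤ s) (hsn : s ≤ n) {q : ℝ[X]}
    (hq : ∀ x, eval x (derivative^[s] q) = jacobiPhat a b (n - s) x)
    (hq₀ : ∀ j < s, eval (-1) (derivative^[j] q) = 0) (x : ℝ) :
    jacobiJ a b s n x = eval x q := by
  obtain ⟨r, rfl⟩ : ∃ r, s = r + 1 := ⟨s - 1, by omega⟩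
  rw [jacobiJ, if_neg (by omega), Nat.add_sub_cancel,
    ← integral_pow_mul_iterate_derivative_eq_eval q (-1) x r fun j hj => hq₀ j (by omega)]
  simp only [hq]

lemma exists_eval_eq_jacobiJ_of_le {a : ℝ} (ha : -1 < a) {s k : ℕ} (hs : 1 ≤ s) (hsk : s ≤ k) :
    ∃ G : ℝ[X], (∀ u, jacobiJ a 0 s k (1 - 2 * u) = eval u G) ∧
      hypergeomOp (a - s + 1) (a - 2 * s + 2) (k * (k + a - 2 * s + 1)) G = 0 := by
  set c := jacobiA a 0 (k - s) * (poch (a + 1) (k - s) / (k - s).factorial)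
  set P := jacobiHypergeom a 0 (k - s)
  obtain ⟨q, hq, hq₀⟩ := exists_iterate_derivative_eq (C c * P.comp (C 2⁻¹ * (1 - X))) (-1) s
  have hJ := jacobiJ_eq_eval (a := a) (b := 0) hs hsk (q := q) (fun x => by
    rw [hq, jacobiPhat_eq_eval, div_eq_inv_mul (1 - x)]
    simp only [eval_mul, eval_C, eval_comp, eval_sub, eval_one, eval_X]
    rfl) hq₀
  have hlin : ∀ u : ℝ, eval u (C (-2) * X + C 1) = 1 - 2 * u := fun u => by
    simp only [map_neg, neg_mul, map_one, eval_add, eval_neg, eval_mul, eval_C, eval_X, eval_one]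
    ring
  have hcomp : (C (2⁻¹ : ℝ) * (1 - X)).comp (C (-2) * X + C 1) = X :=
    Polynomial.funext fun u => by simp
  refine ⟨q.comp (C (-2) * X + C 1), fun u => by rw [eval_comp, hlin, hJ], ?_⟩
  refine hypergeomOp_eq_zero_of_iterate_derivative (s := s) (by ring) ?_ fun j hj => ?_
  · rw [iterate_derivative_comp_C_mul_X_add_C, hq, mul_comp, C_comp, comp_assoc, hcomp, comp_X,
      hypergeomOp_C_mul, hypergeomOp_C_mul]
    refine mul_eq_zero_of_right _ (mul_eq_zero_of_right _ ?_)
    convert hypergeomOp_jacobiHypergeom ha 0 (k - s) using 2 <;>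
      push_cast [Nat.cast_sub hsk] <;> ring
  · rw [iterate_derivative_comp_C_mul_X_add_C, eval_mul, eval_comp, hlin]
    norm_num [hq₀ j hj]

lemma exists_eval_eq_jacobiJ_of_lt (a b : ℝ) {s k : ℕ} (hks : k < s) {A B : ℝ}
    (hAB : A - B = s - 1) (μ : ℝ) :
    ∃ G : ℝ[X], (∀ u, jacobiJ a b s k (1 - 2 * u) = eval u G) ∧
      (hypergeomOp A B (k * μ) G = 0 ↔ k = 0) := by
  refine ⟨C ((-2 : ℝ) ^ k / k.factorial) * (X - C 1) ^ k, fun u => ?_, ?_⟩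
  · rw [jacobiJ, if_pos hks]
    simp only [eval_mul, eval_C, eval_pow, eval_sub, eval_X]
    rw [div_mul_eq_mul_div, ← mul_pow]
    ring_nf
  rcases k with _ | j
  · simp [hypergeomOp]
  refine iff_of_false (fun h => ?_) (Nat.succ_ne_zero j)
  have hC : (-2 : ℝ) ^ (j + 1) / (j + 1).factorial ≠ 0 := by positivity
  rw [hypergeomOp_C_mul, mul_eq_zero, C_eq_zero, or_iff_right hC] at h
  have hval := eval_one_iterate_derivative_hypergeomOp_X_sub_C_pow A B ((j + 1 : ℕ) * μ) j
  rw [h, iterate_map_zero, eval_zero] at hval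
  have hjs : (j : ℝ) + 1 < s := by exact_mod_cast hks
  have hAB' : A - B - j ≠ 0 := by rw [hAB]; linarith
  exact mul_ne_zero hAB' (by positivity) hval.symm

/-- the Sobolev orthogonal polynomial `S_{m,Y}^{n,(-1,-s)}` is an eigenfunction
of `D_{-s}` (with eigenvalue `-n(n+d-s-1)`) exactly when `m ≤ n-s` or `m = n`. -/
theorem sobolev_eigen_iff (d : ℕ) (hd : 2 ≤ d) (s : ℕ) (hs : 1 ≤ s) (n m : ℕ) (hm : m ≤ n) :
    (∀ t : ℝ,
      t ^ 2 * (1 - t) *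
            deriv (deriv (fun u => jacobiJneg (2 * m + d - 2) s (n - m) (1 - 2 * u) * u ^ m)) t
          + t * ((d : ℝ) - 1 - ((d : ℝ) - s) * t) *
              deriv (fun u => jacobiJneg (2 * m + d - 2) s (n - m) (1 - 2 * u) * u ^ m) t
          - (m : ℝ) * ((m : ℝ) + d - 2) *
              (jacobiJneg (2 * m + d - 2) s (n - m) (1 - 2 * t) * t ^ m)
        = -(n : ℝ) * ((n : ℝ) + d - s - 1) * t *
            (jacobiJneg (2 * m + d - 2) s (n - m) (1 - 2 * t) * t ^ m))
    ↔ (m + s ≤ n ∨ m = n) := by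
  have hα : (-1 : ℝ) < 2 * m + d - 2 + s := by
    have hd' : (2 : ℝ) ≤ d := by exact_mod_cast hd
    linarith [m.cast_nonneg (α := ℝ), s.cast_nonneg (α := ℝ)]
  have hc : -(-(n : ℝ) * (n + d - s - 1)) - m * (m + (d - s) - 1) =
      (n - m : ℕ) * ((n - m : ℕ) + (2 * m + d - 2 + s) - 2 * s + 1) := by
    push_cast [Nat.cast_sub hm]; ring
  simp only [jacobiJneg]
  rcases le_or_gt s (n - m) with hsk | hks
  · obtain ⟨G, hG, hL⟩ := exists_eval_eq_jacobiJ_of_le hα hs hsk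
    simp only [hG, eigen_equation_iff_hypergeomOp_eq_zero, hc]
    refine iff_of_true ?_ (Or.inl (by omega))
    convert hL using 2 <;> ring
  · obtain ⟨G, hG, hL⟩ := exists_eval_eq_jacobiJ_of_lt (2 * m + d - 2 + s) 0 hks
      (A := 2 * m + d - 1) (B := 2 * m + (d - s)) (by ring)
      ((n - m : ℕ) + (2 * m + d - 2 + s) - 2 * s + 1)
    simp only [hG, eigen_equation_iff_hypergeomOp_eq_zero, hc, hL]
    omega

end
end

section
/- Let d ≥ 2 be an integer, n ∈ ℕ and 0 ≤ m ≤ n, and set h(t) = J_{n−m}^{(2m+d−2, −1)}(1−2t) · t^m (the case s = 1). Then for all real t: t²(1−t) h″(t) + t(d−1)(1−t) h′(t) − m(m+d−2) h(t) = −n(n+d−2) · t · h(t). Consequently every polynomial in the span of the Sobolev orthogonal basis of degree n for the inner product ⟨·,·⟩_{−1,−1} on the conic surface is an eigenfunction of the operator D_{−1} with eigenvalue −n(n+d−2). -/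
/-!
For `k = N + 1`, `g(t) = J_k^{(a,-1)}(1-2t)` is an antiderivative of a multiple of the terminating
series `₂F₁(-N, N+a+2; a+2; t)`. Differentiating `t(1-t)g'' + (a+1)(1-t)g' + k(k+a)g` yields
exactly that hypergeometric operator applied to `g'`, so the expression is constant, and it
vanishes at `t = 1` because `g(1) = J_k(-1) = 0`. With `a = 2m+d-2`, the difference of the two
sides of the claimed identity for `h = g·t^m` is `t^(m+1)` times this expression.
-/

open MeasureTheory Finset

noncomputable section

lemma poch_succ (x : ℝ) (k : ℕ) : poch x (k + 1) = poch x k * (x + k) :=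
  ascPochhammer_succ_eval k x

lemma natCast_mul_pow_sub_one (j : ℕ) (z : ℝ) : z * (j * z ^ (j - 1)) = j * z ^ j := by
  cases j <;> simp [pow_succ]; ring

lemma natCast_mul_natCast_sub_one (j : ℕ) : (j : ℝ) * ((j - 1 : ℕ) : ℝ) = j * (j - 1) := by
  cases j <;> simp

section Hypergeometric

variable (A B c : ℝ) (N : ℕ)

def hypergeomCoeff (j : ℕ) : ℝ := poch A j * poch B j / (j.factorial * poch c j)

/-- The degree-`N` truncation of `₂F₁(A, B; c; z)`; for `A = -N` it is the whole series. -/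
def hypergeomSum (z : ℝ) : ℝ := ∑ j ∈ range (N + 1), hypergeomCoeff A B c j * z ^ j

lemma hasDerivAt_hypergeomSum (z : ℝ) :
    HasDerivAt (hypergeomSum A B c N)
      (∑ j ∈ range (N + 1), hypergeomCoeff A B c j * (j * z ^ (j - 1))) z :=
  HasDerivAt.fun_sum fun j _ => (hasDerivAt_pow j z).const_mul _

lemma deriv_hypergeomSum :
    deriv (hypergeomSum A B c N)
      = fun z => ∑ j ∈ range (N + 1), hypergeomCoeff A B c j * (j * z ^ (j - 1)) :=
  funext fun z => (hasDerivAt_hypergeomSum A B c N z).deriv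

lemma hasDerivAt_deriv_hypergeomSum (z : ℝ) :
    HasDerivAt (deriv (hypergeomSum A B c N))
      (∑ j ∈ range (N + 1),
        hypergeomCoeff A B c j * (j * ((j - 1 : ℕ) * z ^ (j - 1 - 1)))) z := by
  rw [deriv_hypergeomSum]
  exact HasDerivAt.fun_sum fun j _ => ((hasDerivAt_pow (j - 1) z).const_mul _).const_mul _

variable {A B c N}

lemma hypergeomCoeff_succ (hc : 0 < c) (j : ℕ) :
    (j + 1) * (c + j) * hypergeomCoeff A B c (j + 1)
      = (A + j) * (B + j) * hypergeomCoeff A B c j := by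
  have hpoch : poch c j ≠ 0 := (ascPochhammer_pos j c hc).ne'
  have hcj : c + j ≠ 0 := by positivity
  simp only [hypergeomCoeff, poch_succ, Nat.factorial_succ]
  push_cast
  field_simp

theorem hypergeomSum_ode (hc : 0 < c) (hA : A + N = 0) (z : ℝ) :
    z * (1 - z) * deriv (deriv (hypergeomSum A B c N)) z
      + (c - (A + B + 1) * z) * deriv (hypergeomSum A B c N) z
      - A * B * hypergeomSum A B c N z = 0 := by
  rw [(hasDerivAt_deriv_hypergeomSum A B c N z).deriv, (hasDerivAt_hypergeomSum A B c N z).deriv,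
    hypergeomSum, mul_sum, mul_sum, mul_sum, ← sum_add_distrib, ← sum_sub_distrib]
  -- termwise the operator leaves a telescoping difference
  have hterm : ∀ j ∈ range (N + 1),
      z * (1 - z) * (hypergeomCoeff A B c j * (j * ((j - 1 : ℕ) * z ^ (j - 1 - 1))))
        + (c - (A + B + 1) * z) * (hypergeomCoeff A B c j * (j * z ^ (j - 1)))
        - A * B * (hypergeomCoeff A B c j * z ^ j)
      = j * (j - 1 + c) * hypergeomCoeff A B c j * z ^ (j - 1)
        - (A + j) * (B + j) * hypergeomCoeff A B c j * z ^ j := fun j _ => by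
    have h₁ := natCast_mul_pow_sub_one j z
    have h₂ := natCast_mul_pow_sub_one (j - 1) z
    have h₃ := natCast_mul_natCast_sub_one j
    linear_combination hypergeomCoeff A B c j * ((1 - z) * j * h₂ + (1 - z) * z ^ (j - 1) * h₃
      - (j - 1 + A + B + 1) * h₁)
  rw [sum_congr rfl hterm, sum_sub_distrib, sum_range_succ', sum_range_succ _ N, hA]
  simp only [Nat.cast_zero, zero_mul, add_zero, Nat.add_sub_cancel, Nat.cast_add_one]
  rw [sum_congr rfl fun i _ => show _ = (A + i) * (B + i) * hypergeomCoeff A B c i * z ^ i by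
    linear_combination z ^ i * hypergeomCoeff_succ (A := A) (B := B) hc i]
  ring

end Hypergeometric

/-- `t(1-t)g'' + b(1-t)g' + μg` has derivative `t(1-t)g''' + (b+1-(b+2)t)g'' + (μ-b)g'`, so it
vanishes identically once `g'` solves this hypergeometric equation and `g(1) = 0`. -/
theorem ode_of_deriv_solves_hypergeom {g φ φ' φ'' : ℝ → ℝ} {b μ : ℝ}
    (hg : ∀ t, HasDerivAt g (φ t) t) (hφ : ∀ t, HasDerivAt φ (φ' t) t)
    (hφ' : ∀ t, HasDerivAt φ' (φ'' t) t)
    (hode : ∀ t, t * (1 - t) * φ'' t + (b + 1 - (b + 2) * t) * φ' t + (μ - b) * φ t = 0)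
    (hg₁ : g 1 = 0) (t : ℝ) :
    t * (1 - t) * φ' t + b * (1 - t) * φ t + μ * g t = 0 := by
  set L : ℝ → ℝ := fun t => t * (1 - t) * φ' t + b * (1 - t) * φ t + μ * g t
  have hL : ∀ s, HasDerivAt L 0 s := fun s => by
    have hw : HasDerivAt (fun t : ℝ => 1 - t) (-1) s := (hasDerivAt_id' s).const_sub 1
    refine (((((hasDerivAt_id' s).fun_mul hw).fun_mul (hφ' s)).fun_add
      ((hw.const_mul b).fun_mul (hφ s))).fun_add ((hg s).const_mul μ)).congr_deriv ?_
    linear_combination hode s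
  calc L t = L 1 := is_const_of_deriv_eq_zero (fun s => (hL s).differentiableAt)
          (fun s => (hL s).deriv) t 1
    _ = 0 := by simp [L, hg₁]

lemma jacobiPhat_one_sub_two_mul (a b : ℝ) (N : ℕ) (t : ℝ) :
    jacobiPhat a b N (1 - 2 * t) = jacobiA a b N * (poch (a + 1) N / N.factorial)
      * hypergeomSum (-N) (N + a + b + 1) (a + 1) N t := by
  have ht : (1 - (1 - 2 * t)) / 2 = t := by ring
  rw [jacobiPhat, jacobiP, ht, mul_assoc]
  rfl

lemma continuous_jacobiPhat (a b : ℝ) (N : ℕ) : Continuous (jacobiPhat a b N) := by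
  unfold jacobiPhat jacobiP
  fun_prop

lemma jacobiJneg_one_succ (a : ℝ) (N : ℕ) (x : ℝ) :
    jacobiJneg a 1 (N + 1) x = ∫ u in (-1 : ℝ)..x, jacobiPhat (a + 1) 0 N u := by
  simp [jacobiJneg, jacobiJ]

lemma hasDerivAt_jacobiJneg_one_succ (a : ℝ) (N : ℕ) (t : ℝ) :
    HasDerivAt (fun u => jacobiJneg a 1 (N + 1) (1 - 2 * u))
      (-2 * jacobiPhat (a + 1) 0 N (1 - 2 * t)) t := by
  simp only [jacobiJneg_one_succ]
  have hJ := ((continuous_jacobiPhat (a + 1) 0 N).integral_hasStrictDerivAt (-1)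
    (1 - 2 * t)).hasDerivAt
  have hin : HasDerivAt (fun u : ℝ => 1 - 2 * u) (-2) t := by
    simpa using ((hasDerivAt_id' t).const_mul 2).const_sub 1
  exact (hJ.comp t hin).congr_deriv (mul_comm _ _)

theorem exists_jacobiJneg_one_ode {a : ℝ} (ha : 0 < a + 2) (k : ℕ) :
    ∃ g' g'' : ℝ → ℝ,
      (∀ t, HasDerivAt (fun u => jacobiJneg a 1 k (1 - 2 * u)) (g' t) t) ∧
      (∀ t, HasDerivAt g' (g'' t) t) ∧
      ∀ t, t * (1 - t) * g'' t + (a + 1) * (1 - t) * g' t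
        + k * (k + a) * jacobiJneg a 1 k (1 - 2 * t) = 0 := by
  rcases k with _ | N
  · refine ⟨0, 0, fun t => ?_, fun t => hasDerivAt_const t 0, fun t => by simp⟩
    simpa [jacobiJneg, jacobiJ] using hasDerivAt_const t (1 : ℝ)
  set F := hypergeomSum (-N) (N + (a + 1) + 0 + 1) (a + 1 + 1) N
  set K := -2 * (jacobiA (a + 1) 0 N * (poch (a + 1 + 1) N / N.factorial))
  have hF : ∀ t, HasDerivAt F (deriv F t) t := fun t =>
    (hasDerivAt_hypergeomSum _ _ _ N t).differentiableAt.hasDerivAt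
  have hF' : ∀ t, HasDerivAt (deriv F) (deriv (deriv F) t) t := fun t =>
    (hasDerivAt_deriv_hypergeomSum _ _ _ N t).differentiableAt.hasDerivAt
  have hg : ∀ t, HasDerivAt (fun u => jacobiJneg a 1 (N + 1) (1 - 2 * u)) (K * F t) t :=
    fun t => by simpa only [jacobiPhat_one_sub_two_mul, K, mul_assoc] using
      hasDerivAt_jacobiJneg_one_succ a N t
  refine ⟨_, _, hg, fun t => (hF t).const_mul K,
    ode_of_deriv_solves_hypergeom hg (fun t => (hF t).const_mul K) (fun t => (hF' t).const_mul K)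
      (fun t => ?_) ?_⟩
  · have := hypergeomSum_ode (A := -N) (B := N + (a + 1) + 0 + 1) (c := a + 1 + 1) (N := N)
      (by linarith) (by ring) t
    push_cast
    linear_combination K * this
  · norm_num [jacobiJneg_one_succ]

theorem eigen_eq_mul_pow_of_ode {g g' g'' : ℝ → ℝ} {d n : ℝ} (m : ℕ)
    (hg : ∀ t, HasDerivAt g (g' t) t) (hg' : ∀ t, HasDerivAt g' (g'' t) t)
    (hode : ∀ t, t * (1 - t) * g'' t + (2 * m + d - 1) * (1 - t) * g' t
      + (n - m) * (n + m + d - 2) * g t = 0) (t : ℝ) :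
    t ^ 2 * (1 - t) * deriv (deriv fun u => g u * u ^ m) t
        + t * (d - 1) * (1 - t) * deriv (fun u => g u * u ^ m) t
        - m * (m + d - 2) * (g t * t ^ m)
      = -n * (n + d - 2) * t * (g t * t ^ m) := by
  have hh : ∀ s,
      HasDerivAt (fun u => g u * u ^ m) (g' s * s ^ m + g s * (m * s ^ (m - 1))) s :=
    fun s => (hg s).mul (hasDerivAt_pow m s)
  have hh' : HasDerivAt (fun s => g' s * s ^ m + g s * (m * s ^ (m - 1)))
      (g'' t * t ^ m + g' t * (m * t ^ (m - 1))
        + (g' t * (m * t ^ (m - 1)) + g t * (m * ((m - 1 : ℕ) * t ^ (m - 1 - 1))))) t :=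
    ((hg' t).mul (hasDerivAt_pow m t)).add ((hg t).mul ((hasDerivAt_pow (m - 1) t).const_mul _))
  rw [funext fun s => (hh s).deriv, hh'.deriv]
  have h₁ := natCast_mul_pow_sub_one m t
  have h₂ := natCast_mul_pow_sub_one (m - 1) t
  have h₃ := natCast_mul_natCast_sub_one m
  linear_combination t * t ^ m * hode t + 2 * t * (1 - t) * g' t * h₁
    + g t * t * (1 - t) * m * h₂ + g t * (1 - t) * ((m - 1 : ℕ) + d - 1) * h₁
    + g t * (1 - t) * t ^ m * h₃

/-- case `s = 1`: every Sobolev orthogonal polynomial of degree `n` for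
`⟨·,·⟩_{-1,-1}` is an eigenfunction of `D_{-1}` with eigenvalue `-n(n+d-2)`, expressed through
the one-variable identity for `h(t) = J_{n-m}^{(2m+d-2,-1)}(1-2t) t^m`. -/
theorem sobolev_eigen_s_one (d : ℕ) (hd : 2 ≤ d) (n m : ℕ) (hm : m ≤ n) (t : ℝ) :
    t ^ 2 * (1 - t) *
          deriv (deriv (fun u => jacobiJneg (2 * m + d - 2) 1 (n - m) (1 - 2 * u) * u ^ m)) t
        + t * ((d : ℝ) - 1) * (1 - t) *
            deriv (fun u => jacobiJneg (2 * m + d - 2) 1 (n - m) (1 - 2 * u) * u ^ m) t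
        - (m : ℝ) * ((m : ℝ) + d - 2) *
            (jacobiJneg (2 * m + d - 2) 1 (n - m) (1 - 2 * t) * t ^ m)
      = -(n : ℝ) * ((n : ℝ) + d - 2) * t *
          (jacobiJneg (2 * m + d - 2) 1 (n - m) (1 - 2 * t) * t ^ m) := by
  have ha : (0 : ℝ) < 2 * m + d - 2 + 2 := by
    have : (2 : ℝ) ≤ d := by exact_mod_cast hd
    linarith [(m.cast_nonneg : (0 : ℝ) ≤ m)]
  obtain ⟨g', g'', hg, hg', hode⟩ := exists_jacobiJneg_one_ode ha (n - m)
  refine eigen_eq_mul_pow_of_ode m hg hg' (fun s => ?_) t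
  rw [Nat.cast_sub hm] at hode
  linear_combination hode s

end
end
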